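/- arXiv:1106.3118 — 4 statements merged into one kernel-verified Lean document; each statement's English description precedes it below -/
import Mathlib

section
/- Let R_− : X → ℝ be continuous with R_− ≤ 0, and for each c > 0 let g_c : X → ℝ be continuous with ∫_M e^{g_c(ax)} dm(a) = 1 for all x ∈ X, and assume sup_{x∈X} |g_c(x) − c R_−(x)| / c → 0 as c → ∞. Then for every ε > 0 there exists a constant ψ_ε > 0 such that for every x ∈ X, m({a ∈ M : R_−(ax) > −ε}) > ψ_ε. -/
open MeasureTheory Filter Topology Set ENNReal

noncomputable section

namespace GXY

variable {M : Type*}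

/-- The shift map on the sequence space `ℕ → M`. -/
def shift (x : ℕ → M) : ℕ → M := fun n => x (n + 1)

/-- Prepending a symbol `a` to a sequence `x`. -/
def cons (a : M) (x : ℕ → M) : ℕ → M := fun n => Nat.casesOn n a x

/-- The metric `d(x,y) = ∑ θ^n d_M(x_n, y_n)` on `ℕ → M`. -/
def D [MetricSpace M] (θ : ℝ) (x y : ℕ → M) : ℝ := ∑' n, θ ^ n * dist (x n) (y n)

/-- Hölder continuity with respect to the metric `D θ`. -/
def IsHolder [MetricSpace M] (θ : ℝ) (f : (ℕ → M) → ℝ) : Prop :=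
  ∃ C > (0 : ℝ), ∃ α ∈ Set.Ioc (0 : ℝ) 1, ∀ x y, |f x - f y| ≤ C * (D θ x y) ^ α

/-- Shift-invariant Borel probability measures on `ℕ → M`. -/
def IsInvProb [MetricSpace M] [MeasurableSpace M] (μ : Measure (ℕ → M)) : Prop :=
  IsProbabilityMeasure μ ∧ μ.map shift = μ

/-- The maximal ergodic average `β(f)`. -/
def betaF [MetricSpace M] [MeasurableSpace M] (f : (ℕ → M) → ℝ) : ℝ :=
  sSup { r | ∃ μ : Measure (ℕ → M), IsInvProb μ ∧ r = ∫ x, f x ∂μ }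

/-- A maximizing measure for `f`. -/
def IsMaximizing [MetricSpace M] [MeasurableSpace M] (f : (ℕ → M) → ℝ)
    (μ : Measure (ℕ → M)) : Prop :=
  IsInvProb μ ∧ ∫ x, f x ∂μ = betaF f

/-- A calibrated subaction `V` for `f`:
`V y = max_{σ x = y} (f x + V x - β f)` for every `y`. -/
def IsCalibrated [MetricSpace M] [MeasurableSpace M] (f V : (ℕ → M) → ℝ) : Prop :=
  Continuous V ∧
    ∀ y, IsGreatest { t | ∃ x, shift x = y ∧ t = f x + V x - betaF f } (V y)

/-- The Ruelle transfer operator `(L_g w)(x) = ∫_M e^{g(ax)} w(ax) dm(a)`. -/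
def Ruelle [MetricSpace M] [MeasurableSpace M] (m : Measure M) (g w : (ℕ → M) → ℝ) :
    (ℕ → M) → ℝ :=
  fun x => ∫ a, Real.exp (g (cons a x)) * w (cons a x) ∂m

/-- `R₊ = β(f) + V ∘ σ - V - f ≥ 0`. -/
def Rplus [MetricSpace M] [MeasurableSpace M] (f V : (ℕ → M) → ℝ) (x : ℕ → M) : ℝ :=
  betaF f + V (shift x) - V x - f x

/-- `R₊^∞(z) = ∑_{j≥0} R₊(σ^j z) ∈ [0,∞]`. -/
def RplusInf [MetricSpace M] [MeasurableSpace M] (f V : (ℕ → M) → ℝ) (z : ℕ → M) : ℝ≥0∞ :=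
  ∑' j : ℕ, ENNReal.ofReal (Rplus f V (shift^[j] z))

/-- `R₋ = f + V - V ∘ σ - β(f) ≤ 0`. -/
def Rminus [MetricSpace M] [MeasurableSpace M] (f V : (ℕ → M) → ℝ) (x : ℕ → M) : ℝ :=
  f x + V x - V (shift x) - betaF f

/-- The Birkhoff sum `R₋^k = ∑_{j<k} R₋ ∘ σ^j`. -/
def RminusBirk [MetricSpace M] [MeasurableSpace M] (f V : (ℕ → M) → ℝ) (k : ℕ)
    (z : ℕ → M) : ℝ :=
  ∑ j ∈ Finset.range k, Rminus f V (shift^[j] z)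

/-- Extended-real logarithm with the convention `log 0 = -∞`. -/
def elog (t : ℝ) : EReal := if t = 0 then ⊥ else ((Real.log t : ℝ) : EReal)

/-! Choose `c` so large that `g_c ≤ c R₋ + δ` with `δ = c ε / 2`. Then `e^{g_c(ax)}` is at most
`e^δ` on `A = {a | R₋(ax) > -ε}` and at most `e^{-δ}` off it, so the normalisation
`∫ e^{g_c(ax)} dm(a) = 1` forces `m(A) ≥ e^{-δ} (1 - e^{-δ})`, uniformly in `x`. -/

theorem measureReal_ge_of_integral_exp_eq_one {α : Type*} [MeasurableSpace α] {μ : Measure α}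
    [IsProbabilityMeasure μ] {h : α → ℝ} {s : Set α} {δ : ℝ}
    (hint : ∫ a, Real.exp (h a) ∂μ = 1)
    (hs : ∀ a ∈ s, h a ≤ δ) (hsc : ∀ a ∉ s, h a ≤ -δ) :
    Real.exp (-δ) * (1 - Real.exp (-δ)) ≤ μ.real s := by
  -- `s` need not be measurable: integrate against its measurable hull instead.
  set t := toMeasurable μ s
  have ht : MeasurableSet t := measurableSet_toMeasurable μ s
  have hbound : ∀ a, Real.exp (h a) ≤ Real.exp (-δ) + t.indicator (fun _ ↦ Real.exp δ) a := by
    intro a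
    by_cases ha : a ∈ s
    · rw [indicator_of_mem (subset_toMeasurable μ s ha)]
      linarith [Real.exp_le_exp.mpr (hs a ha), Real.exp_pos (-δ)]
    · linarith [Real.exp_le_exp.mpr (hsc a ha),
        indicator_nonneg (fun _ _ ↦ (Real.exp_pos δ).le) a (s := t)]
  have hle : 1 ≤ Real.exp (-δ) + μ.real s * Real.exp δ := by
    calc 1 = ∫ a, Real.exp (h a) ∂μ := hint.symm
      _ ≤ ∫ a, Real.exp (-δ) + t.indicator (fun _ ↦ Real.exp δ) a ∂μ :=
        integral_mono (.of_integral_ne_zero (by simp [hint]))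
          ((integrable_const _).add ((integrable_const _).indicator ht)) hbound
      _ = Real.exp (-δ) + μ.real s * Real.exp δ := by
        rw [integral_add (integrable_const _) ((integrable_const _).indicator ht),
          integral_indicator_const _ ht, measureReal_def, measure_toMeasurable]
        simp [measureReal_def]
  have hinv : Real.exp (-δ) * Real.exp δ = 1 := by rw [← Real.exp_add, neg_add_cancel, Real.exp_zero]
  calc Real.exp (-δ) * (1 - Real.exp (-δ))
      ≤ Real.exp (-δ) * (Real.exp (-δ) + μ.real s * Real.exp δ - Real.exp (-δ)) := by gcongr
    _ = μ.real s := by linear_combination μ.real s * hinv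

theorem mass_near_zero_of_Rminus_general
    [MeasurableSpace M]
    (m : Measure M) [IsProbabilityMeasure m]
    (R : (ℕ → M) → ℝ) (hRle : ∀ x, R x ≤ 0)
    (g : ℝ → (ℕ → M) → ℝ)
    (hnorm : ∀ c > (0 : ℝ), ∀ x, ∫ a, Real.exp (g c (cons a x)) ∂m = 1)
    (hconv : ∀ ε > (0 : ℝ), ∃ N : ℝ, ∀ c > N, ∀ x, |g c x - c * R x| / c < ε) :
    ∀ ε > (0 : ℝ), ∃ ψ > (0 : ℝ), ∀ x : ℕ → M,
      ENNReal.ofReal ψ < m { a : M | -ε < R (cons a x) } := by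
  intro ε hε
  obtain ⟨N, hN⟩ := hconv (ε / 2) (half_pos hε)
  obtain ⟨c, hc, hcN⟩ : ∃ c, 0 < c ∧ N < c := ⟨max N 0 + 1, by positivity, by grind⟩
  set δ := c * (ε / 2) with hδ
  have hg : ∀ y, g c y ≤ c * R y + δ := fun y ↦ by
    linarith [(abs_lt.mp ((div_lt_iff₀ hc).mp (hN c hcN y))).2]
  set κ := Real.exp (-δ) * (1 - Real.exp (-δ))
  have hκ : 0 < κ := mul_pos (Real.exp_pos _)
    (sub_pos.mpr (Real.exp_lt_one_iff.mpr (by linarith [mul_pos hc (half_pos hε)])))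
  refine ⟨κ / 2, half_pos hκ, fun x ↦ ?_⟩
  have hmass : κ ≤ m.real {a | -ε < R (cons a x)} := by
    refine measureReal_ge_of_integral_exp_eq_one (hnorm c hc x) (fun a _ ↦ ?_) (fun a ha ↦ ?_)
    · linarith [hg (cons a x), mul_nonpos_of_nonneg_of_nonpos hc.le (hRle (cons a x))]
    · have hR : R (cons a x) ≤ -ε := le_of_not_gt ha
      linarith [hg (cons a x), mul_le_mul_of_nonneg_left hR hc.le]
  rw [ENNReal.ofReal_lt_iff_lt_toReal (half_pos hκ).le (measure_ne_top _ _)]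
  exact (half_lt_self hκ).trans_le hmass

theorem mass_near_zero_of_Rminus
    [MetricSpace M] [CompactSpace M] [ConnectedSpace M] [MeasurableSpace M] [BorelSpace M]
    (hdiam : ∀ a b : M, dist a b ≤ 1)
    (θ : ℝ) (hθ : θ ∈ Set.Ioo (0 : ℝ) 1)
    (m : Measure M) [IsProbabilityMeasure m]
    (R : (ℕ → M) → ℝ) (hRcont : Continuous R) (hRle : ∀ x, R x ≤ 0)
    (g : ℝ → (ℕ → M) → ℝ)
    (hgcont : ∀ c > (0 : ℝ), Continuous (g c))
    (hnorm : ∀ c > (0 : ℝ), ∀ x, ∫ a, Real.exp (g c (cons a x)) ∂m = 1)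
    (hconv : ∀ ε > (0 : ℝ), ∃ N : ℝ, ∀ c > N, ∀ x, |g c x - c * R x| / c < ε) :
    ∀ ε > (0 : ℝ), ∃ ψ > (0 : ℝ), ∀ x : ℕ → M,
      ENNReal.ofReal ψ < m { a : M | -ε < R (cons a x) } :=
  mass_near_zero_of_Rminus_general m R hRle g hnorm hconv

end GXY
end
end

section
/- Let f : X → ℝ be Hölder continuous, V a calibrated subaction for f, and R_− = f + V − V∘σ − β(f) (so R_− ≤ 0). For each c > 0 let g_c : X → ℝ be continuous with ∫_M e^{g_c(ax)} dm(a) = 1 for all x ∈ X, and assume sup_{x∈X} |g_c(x) − c R_−(x)| / c → 0 as c → ∞. Then for every x ∈ X, liminf_{c,n→∞} (L_{g_c}^n R_−)(x) ≥ 0. -/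
open MeasureTheory Filter Topology Set ENNReal

noncomputable section

namespace GXY

variable {M : Type*}

section Aux
variable [MetricSpace M] [CompactSpace M] [MeasurableSpace M] [BorelSpace M]

lemma shift_continuous : Continuous (shift : (ℕ → M) → (ℕ → M)) :=
  continuous_pi fun n => continuous_apply (n + 1)

lemma cons_continuous : Continuous (fun p : M × (ℕ → M) => cons p.1 p.2) := by
  apply continuous_pi
  intro n
  cases n with
  | zero => exact continuous_fst
  | succ k => exact (continuous_apply k).comp continuous_snd

lemma cons_continuous_left (y : ℕ → M) : Continuous (fun a : M => cons a y) :=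
  cons_continuous.comp (continuous_id.prodMk continuous_const)

lemma cons_continuous_right (a : M) : Continuous (fun y : ℕ → M => cons a y) :=
  cons_continuous.comp (continuous_const.prodMk continuous_id)

lemma cont_of_holder {θ : ℝ} (hdiam : ∀ a b : M, dist a b ≤ 1)
    (hθ : θ ∈ Set.Ioo (0 : ℝ) 1) {f : (ℕ → M) → ℝ} (hf : IsHolder θ f) :
    Continuous f := by
  obtain ⟨C, hC, α, hα, hH⟩ := hf
  rw [continuous_iff_continuousAt]
  intro x
  have hDc : Continuous (fun y : ℕ → M => D θ x y) := by
    apply continuous_tsum (u := fun n => θ ^ n)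
    · intro n
      exact continuous_const.mul (Continuous.dist continuous_const (continuous_apply n))
    · exact summable_geometric_of_lt_one hθ.1.le hθ.2
    · intro n y
      have h1 : (0:ℝ) ≤ θ ^ n := pow_nonneg hθ.1.le n
      rw [Real.norm_eq_abs, abs_of_nonneg (mul_nonneg h1 dist_nonneg)]
      calc θ ^ n * dist (x n) (y n) ≤ θ ^ n * 1 :=
            mul_le_mul_of_nonneg_left (hdiam _ _) h1
        _ = θ ^ n := mul_one _
  have hD0 : D θ x x = 0 := by simp [D]
  have hten : Tendsto (fun y => C * (D θ x y) ^ α) (𝓝 x) (𝓝 0) := by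
    have h2 : Tendsto (fun y => D θ x y) (𝓝 x) (𝓝 0) := by
      have := hDc.continuousAt (x := x)
      rwa [ContinuousAt, hD0] at this
    have h3 : ContinuousAt (fun t : ℝ => t ^ α) 0 :=
      Real.continuousAt_rpow_const 0 α (Or.inr hα.1.le)
    have h4 := h3.tendsto.comp h2
    rw [Real.zero_rpow (ne_of_gt hα.1)] at h4
    have h5 := (tendsto_const_nhds (x := C) (f := 𝓝 x)).mul h4
    simpa using h5
  rw [ContinuousAt, tendsto_iff_dist_tendsto_zero]
  apply squeeze_zero (fun y => dist_nonneg) (fun y => ?_) hten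
  rw [Real.dist_eq, abs_sub_comm]
  exact hH x y

lemma integrable_of_continuous (m : Measure M) [IsFiniteMeasure m] {w : M → ℝ}
    (hw : Continuous w) : Integrable w m := by
  obtain ⟨B, hB⟩ := (isCompact_range hw.norm).bddAbove
  exact (integrable_const B).mono' hw.aestronglyMeasurable
    (Filter.Eventually.of_forall fun a => hB (Set.mem_range_self a))

variable {m : Measure M} [IsProbabilityMeasure m]

lemma ruelle_continuous {g w : (ℕ → M) → ℝ} (hg : Continuous g) (hw : Continuous w) :
    Continuous (Ruelle m g w) := by
  have hjoint : Continuous (fun p : M × (ℕ → M) =>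
      Real.exp (g (cons p.1 p.2)) * w (cons p.1 p.2)) :=
    (Real.continuous_exp.comp (hg.comp cons_continuous)).mul (hw.comp cons_continuous)
  obtain ⟨B, hB⟩ := (isCompact_range hjoint.norm).bddAbove
  have hcontA : ∀ y : ℕ → M, Continuous fun a : M =>
      Real.exp (g (cons a y)) * w (cons a y) := fun y =>
    (Real.continuous_exp.comp (hg.comp (cons_continuous_left y))).mul
      (hw.comp (cons_continuous_left y))
  have hcontY : ∀ a : M, Continuous fun y : ℕ → M =>
      Real.exp (g (cons a y)) * w (cons a y) := fun a =>
    (Real.continuous_exp.comp (hg.comp (cons_continuous_right a))).mul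
      (hw.comp (cons_continuous_right a))
  show Continuous fun y : ℕ → M => ∫ a, Real.exp (g (cons a y)) * w (cons a y) ∂m
  apply MeasureTheory.continuous_of_dominated (bound := fun _ => B)
  · intro y
    exact (hcontA y).aestronglyMeasurable
  · intro y
    exact Filter.Eventually.of_forall fun a => hB (Set.mem_range_self (a, y))
  · exact integrable_const B
  · exact Filter.Eventually.of_forall fun a => hcontY a

lemma ruelle_ge {g w : (ℕ → M) → ℝ} (hg : Continuous g) (hw : Continuous w)
    (hnorm1 : ∀ x, ∫ a, Real.exp (g (cons a x)) ∂m = 1)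
    {b : ℝ} (hb : ∀ z, -b ≤ w z) (y : ℕ → M) : -b ≤ Ruelle m g w y := by
  have hca := cons_continuous_left (M := M) y
  have hE : Continuous fun a : M => Real.exp (g (cons a y)) :=
    Real.continuous_exp.comp (hg.comp hca)
  have h1 : Integrable (fun a => Real.exp (g (cons a y)) * w (cons a y)) m :=
    integrable_of_continuous m (hE.mul (hw.comp hca))
  have h2 : Integrable (fun a => Real.exp (g (cons a y)) * (-b)) m :=
    integrable_of_continuous m (hE.mul continuous_const)
  have hle : ∀ a, Real.exp (g (cons a y)) * (-b) ≤ Real.exp (g (cons a y)) * w (cons a y) :=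
    fun a => mul_le_mul_of_nonneg_left (hb _) (Real.exp_pos _).le
  have hmono := MeasureTheory.integral_mono h2 h1 hle
  simp only [Ruelle]
  calc -b = (∫ a, Real.exp (g (cons a y)) ∂m) * (-b) := by rw [hnorm1 y, one_mul]
    _ = ∫ a, Real.exp (g (cons a y)) * (-b) ∂m := (integral_mul_const _ _).symm
    _ ≤ _ := hmono

lemma exp_sub_one_le (t : ℝ) : Real.exp t - 1 ≤ t * Real.exp t := by
  have h := Real.add_one_le_exp (-t)
  have h2 := Real.exp_pos t
  have h3 : Real.exp (-t) * Real.exp t = 1 := by rw [← Real.exp_add]; simp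
  nlinarith

lemma one_step {g₀ R : (ℕ → M) → ℝ} (hg : Continuous g₀) (hR : Continuous R)
    (hnorm1 : ∀ x, ∫ a, Real.exp (g₀ (cons a x)) ∂m = 1)
    {c ε : ℝ} (hc : 0 < c)
    (hclose : ∀ z, |g₀ z - c * R z| < c * ε) (y : ℕ → M) :
    -ε ≤ Ruelle m g₀ R y := by
  have hca := cons_continuous_left (M := M) y
  have hE : Continuous fun a : M => Real.exp (g₀ (cons a y)) :=
    Real.continuous_exp.comp (hg.comp hca)
  have hEint : Integrable (fun a => Real.exp (g₀ (cons a y))) m :=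
    integrable_of_continuous m hE
  have hpt : ∀ a : M, (1/c) * (Real.exp (g₀ (cons a y)) - 1) - ε * Real.exp (g₀ (cons a y))
      ≤ Real.exp (g₀ (cons a y)) * R (cons a y) := by
    intro a
    set E := Real.exp (g₀ (cons a y)) with hEdef
    have hEpos : 0 < E := Real.exp_pos _
    have h1 : g₀ (cons a y) - c * R (cons a y) < c * ε := (abs_lt.mp (hclose (cons a y))).2
    have hr : g₀ (cons a y) / c - ε ≤ R (cons a y) := by
      rw [sub_le_iff_le_add, div_le_iff₀ hc]
      nlinarith
    have hA : E * (g₀ (cons a y) / c - ε) ≤ E * R (cons a y) :=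
      mul_le_mul_of_nonneg_left hr hEpos.le
    have hB : (1/c) * (E - 1) ≤ (1/c) * (g₀ (cons a y) * E) :=
      mul_le_mul_of_nonneg_left (exp_sub_one_le _) (by positivity)
    have hC : E * (g₀ (cons a y) / c - ε) = (1/c) * (g₀ (cons a y) * E) - ε * E := by ring
    linarith [hA, hB]
  have hint1 : Integrable (fun a => Real.exp (g₀ (cons a y)) * R (cons a y)) m :=
    integrable_of_continuous m (hE.mul (hR.comp hca))
  have hint2 : Integrable (fun a => (1/c) * (Real.exp (g₀ (cons a y)) - 1)
      - ε * Real.exp (g₀ (cons a y))) m :=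
    integrable_of_continuous m
      ((continuous_const.mul (hE.sub continuous_const)).sub (continuous_const.mul hE))
  have hmono := MeasureTheory.integral_mono hint2 hint1 hpt
  have hval : ∫ a, ((1/c) * (Real.exp (g₀ (cons a y)) - 1)
      - ε * Real.exp (g₀ (cons a y))) ∂m = -ε := by
    have hiA : Integrable (fun a => Real.exp (g₀ (cons a y)) - 1) m :=
      hEint.sub (integrable_const 1)
    have hiB : Integrable (fun a => (1/c) * (Real.exp (g₀ (cons a y)) - 1)) m :=
      hiA.const_mul _
    have hiC : Integrable (fun a => ε * Real.exp (g₀ (cons a y))) m :=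
      hEint.const_mul _
    rw [integral_sub hiB hiC, integral_const_mul, integral_const_mul,
        integral_sub hEint (integrable_const 1), hnorm1 y]
    simp
  simp only [Ruelle]
  rw [hval] at hmono
  exact hmono

end Aux

theorem liminf_Ruelle_Rminus_nonneg
    [MetricSpace M] [CompactSpace M] [ConnectedSpace M] [MeasurableSpace M] [BorelSpace M]
    (hdiam : ∀ a b : M, dist a b ≤ 1)
    (θ : ℝ) (hθ : θ ∈ Set.Ioo (0 : ℝ) 1)
    (m : Measure M) [IsProbabilityMeasure m]
    (f V : (ℕ → M) → ℝ) (hf : IsHolder θ f) (hV : IsCalibrated f V)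
    (g : ℝ → (ℕ → M) → ℝ)
    (hgcont : ∀ c > (0 : ℝ), Continuous (g c))
    (hnorm : ∀ c > (0 : ℝ), ∀ x, Ruelle m (g c) (fun _ => 1) x = 1)
    (hconv : ∀ ε > (0 : ℝ), ∃ N : ℝ, ∀ c > N, ∀ x, |g c x - c * Rminus f V x| / c < ε)
    :
    ∀ x : ℕ → M, ∀ ε > (0 : ℝ), ∃ N : ℝ, ∀ c > N, ∀ n : ℕ, (n : ℝ) > N →
      (Ruelle m (g c))^[n] (Rminus f V) x > 0 - ε := by
  intro x ε hε
  have hε2 : (0:ℝ) < ε / 2 := by linarith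
  obtain ⟨N₀, hN₀⟩ := hconv (ε / 2) hε2
  refine ⟨max N₀ 0, ?_⟩
  intro c hc n hn
  have hc0 : 0 < c := lt_of_le_of_lt (le_max_right N₀ 0) hc
  have hcN : N₀ < c := lt_of_le_of_lt (le_max_left N₀ 0) hc
  have hgc : Continuous (g c) := hgcont c hc0
  have hfc : Continuous f := cont_of_holder hdiam hθ hf
  have hRc : Continuous (Rminus f V) := by
    have hVc := hV.1
    exact ((hfc.add hVc).sub (hVc.comp shift_continuous)).sub continuous_const
  have hnorm1 : ∀ y, ∫ a, Real.exp (g c (cons a y)) ∂m = 1 := by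
    intro y
    have h := hnorm c hc0 y
    simpa [Ruelle] using h
  have hclose : ∀ z, |g c z - c * Rminus f V z| < c * (ε / 2) := by
    intro z
    have h := hN₀ c hcN z
    rw [div_lt_iff₀ hc0] at h
    linarith [h]
  obtain ⟨k, rfl⟩ : ∃ k, n = k + 1 := by
    cases n with
    | zero =>
      exfalso
      have h0 : (0:ℝ) ≤ max N₀ 0 := le_max_right _ _
      simp only [Nat.cast_zero] at hn
      linarith
    | succ k => exact ⟨k, rfl⟩
  have main : ∀ k : ℕ, Continuous ((Ruelle m (g c))^[k] (Ruelle m (g c) (Rminus f V))) ∧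
      ∀ y, -(ε/2) ≤ (Ruelle m (g c))^[k] (Ruelle m (g c) (Rminus f V)) y := by
    intro k
    induction k with
    | zero =>
      refine ⟨ruelle_continuous hgc hRc, ?_⟩
      intro y
      exact one_step hgc hRc hnorm1 hc0 hclose y
    | succ j ih =>
      rw [Function.iterate_succ_apply']
      exact ⟨ruelle_continuous hgc ih.1, fun y => ruelle_ge hgc ih.1 hnorm1 ih.2 y⟩
  rw [Function.iterate_succ_apply]
  have hfin := (main k).2 x
  linarith

end GXY
end
end

section
/- Let f : X → ℝ be Hölder continuous admitting a unique maximizing measure, let V be a calibrated subaction for f, and set R_− = f + V − V∘σ − β(f). For each c > 0 let g_c : X → ℝ be continuous with ∫_M e^{g_c(ax)} dm(a) = 1 for all x ∈ X, and assume sup_{x∈X} |g_c(x) − c R_−(x)| / c → 0 as c → ∞. Then for every x ∈ X and every closed set F ⊆ X, limsup_{c,n→∞} (1/c) log (L_{g_c}^n χ_F)(x) ≤ sup_{z∈F} R_−^∞(z) = −inf_{z∈F} R_+^∞(z), with the conventions log 0 = −∞ and sup over the empty set = −∞. -/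
/-!
The error bound `g_c ≤ c R₋ + c ε` bounds `L_{g_c}^k χ_F(x)`, unfolded along the `σ^k`-preimages
`y ∈ F` of `x`, by `sup_y exp (c R₋^k(y) + k c ε)`; the remaining `n - k` iterations cannot increase
this bound since `L_{g_c} 1 = 1`. Because `R₋ ≤ 0`, the Birkhoff sums `R₋^k` decrease to `R₋^∞`, so
if `sup_F R₋^∞ < r'` then by compactness of `F` (Dini's argument) a single `k` has `R₋^k < r'` on
all of `F`. Hence `(1/c) log L_{g_c}^n χ_F(x) ≤ r' + k ε` for all `n ≥ k`, and `ε → 0` as `c → ∞`.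
-/

open MeasureTheory Filter Topology Set ENNReal

noncomputable section

namespace GXY

variable {M : Type*}

theorem _root_.EReal.neg_iInf {ι : Sort*} (v : ι → EReal) : -(⨅ i, v i) = ⨆ i, -v i :=
  congrArg OrderDual.ofDual (EReal.negOrderIso.map_iInf v)

theorem _root_.EReal.coe_ennreal_iInf {ι : Sort*} (v : ι → ℝ≥0∞) :
    ((⨅ i, v i : ℝ≥0∞) : EReal) = ⨅ i, (v i : EReal) :=
  Monotone.map_iInf_of_continuousAt continuous_coe_ennreal_ereal.continuousAt
    (fun _ _ h => EReal.coe_ennreal_le_coe_ennreal_iff.2 h) EReal.coe_ennreal_top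

theorem _root_.birkhoffSum_mul_add_const {α : Type*} (T : α → α) (ψ : α → ℝ) (c ε : ℝ) (k : ℕ)
    (z : α) : birkhoffSum T (fun y => c * ψ y + ε) k z = c * birkhoffSum T ψ k z + k * ε := by
  simp only [birkhoffSum, Finset.sum_add_distrib, ← Finset.mul_sum, Finset.sum_const,
    Finset.card_range, nsmul_eq_mul]

theorem _root_.IsCompact.exists_forall_lt_of_antitone {X : Type*} [TopologicalSpace X]
    {K : Set X} (hK : IsCompact K) {u : ℕ → X → ℝ} (hu : ∀ k, Continuous (u k))
    (hanti : ∀ x, Antitone fun k => u k x) {A : ℝ} (h : ∀ x ∈ K, ∃ k, u k x < A) :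
    ∃ k, ∀ x ∈ K, u k x < A :=
  hK.elim_directed_cover (fun k => {x | u k x < A}) (fun k => isOpen_lt (hu k) continuous_const)
    (fun x hx => mem_iUnion.2 (h x hx))
    (Monotone.directed_le fun _ _ hij x hx => (hanti x hij).trans_lt hx)

theorem coe_one_div_mul_elog_lt {c s r t : ℝ} (hc : 0 < c) (ht0 : 0 ≤ t)
    (ht : t ≤ Real.exp (c * s)) (hsr : s < r) : ((1 / c : ℝ) : EReal) * elog t < r := by
  rcases ht0.eq_or_lt with rfl | htpos
  · rw [elog, if_pos rfl, EReal.coe_mul_bot_of_pos (by positivity)]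
    exact EReal.bot_lt_coe r
  rw [elog, if_neg htpos.ne', ← EReal.coe_mul, EReal.coe_lt_coe_iff]
  calc 1 / c * Real.log t ≤ 1 / c * (c * s) :=
        mul_le_mul_of_nonneg_left ((Real.log_le_iff_le_exp htpos).2 ht) (by positivity)
    _ = s := by field_simp
    _ < r := hsr

lemma shift_cons (a : M) (x : ℕ → M) : shift (cons a x) = x := rfl

lemma continuous_shift [TopologicalSpace M] : Continuous (shift : (ℕ → M) → ℕ → M) :=
  continuous_pi fun n => continuous_apply (n + 1)

section Metric

variable [MetricSpace M] {C θ : ℝ}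

lemma D_self (θ : ℝ) (x : ℕ → M) : D θ x x = 0 := by
  simp [D]

lemma continuous_D (hM : ∀ a b : M, dist a b ≤ C) (hθ0 : 0 ≤ θ) (hθ1 : θ < 1) (x : ℕ → M) :
    Continuous (D θ x) := by
  refine continuous_tsum (u := fun n => C * θ ^ n)
    (fun n => continuous_const.mul (continuous_const.dist (continuous_apply n)))
    ((summable_geometric_of_lt_one hθ0 hθ1).mul_left C) fun n y => ?_
  rw [Real.norm_eq_abs, abs_of_nonneg (by have := dist_nonneg (x := x n) (y := y n); positivity),
    mul_comm]
  exact mul_le_mul_of_nonneg_right (hM _ _) (by positivity)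

lemma IsHolder.continuous (hM : ∀ a b : M, dist a b ≤ C) (hθ0 : 0 ≤ θ) (hθ1 : θ < 1)
    {f : (ℕ → M) → ℝ} (hf : IsHolder θ f) : Continuous f := by
  obtain ⟨K, -, α, hα, hfK⟩ := hf
  refine continuous_iff_continuousAt.2 fun x => tendsto_iff_norm_sub_tendsto_zero.2 ?_
  have hD : Tendsto (fun y => K * D θ x y ^ α) (𝓝 x) (𝓝 0) := by
    simpa [D_self, Real.zero_rpow hα.1.ne'] using
      (((continuous_D hM hθ0 hθ1 x).tendsto x).rpow_const (Or.inr hα.1.le)).const_mul K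
  refine squeeze_zero (fun _ => norm_nonneg _) (fun y => ?_) hD
  rw [Real.norm_eq_abs, abs_sub_comm]
  exact hfK x y

end Metric

section Residual

variable [MetricSpace M] [MeasurableSpace M] {f V : (ℕ → M) → ℝ}

lemma RminusBirk_eq_birkhoffSum (f V : (ℕ → M) → ℝ) :
    RminusBirk f V = birkhoffSum shift (Rminus f V) := rfl

lemma Rminus_nonpos (hV : IsCalibrated f V) (x : ℕ → M) : Rminus f V x ≤ 0 := by
  have h := (hV.2 (shift x)).2 ⟨x, rfl, rfl⟩
  simp only [Rminus]
  linarith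

lemma RminusBirk_antitone (hV : IsCalibrated f V) (z : ℕ → M) :
    Antitone fun k => RminusBirk f V k z :=
  antitone_nat_of_succ_le fun k => by
    simpa [RminusBirk_eq_birkhoffSum, birkhoffSum_succ] using Rminus_nonpos hV _

lemma continuous_RminusBirk (hf : Continuous f) (hV : IsCalibrated f V) (k : ℕ) :
    Continuous (RminusBirk f V k) := by
  have hR : Continuous (Rminus f V) :=
    ((hf.add hV.1).sub (hV.1.comp continuous_shift)).sub continuous_const
  exact continuous_finsetSum _ fun j _ => hR.comp (continuous_shift.iterate j)

lemma le_neg_RplusInf_of_forall_le (hV : IsCalibrated f V) {z : ℕ → M} {r : ℝ}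
    (h : ∀ k, r ≤ RminusBirk f V k z) : (r : EReal) ≤ -(RplusInf f V z : EReal) := by
  have hr : 0 ≤ -r := by simpa [RminusBirk] using h 0
  have hRplus : ∀ w, 0 ≤ Rplus f V w := fun w => by
    have := Rminus_nonpos hV w
    simp only [Rplus, Rminus] at this ⊢
    linarith
  have hle : RplusInf f V z ≤ ENNReal.ofReal (-r) := by
    rw [RplusInf, ENNReal.tsum_eq_iSup_nat]
    refine iSup_le fun k => ?_
    rw [← ENNReal.ofReal_sum_of_nonneg fun j _ => hRplus _]
    have hsum : ∑ j ∈ Finset.range k, Rplus f V (shift^[j] z) = -RminusBirk f V k z := by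
      rw [RminusBirk, ← Finset.sum_neg_distrib]
      exact Finset.sum_congr rfl fun j _ => by simp only [Rplus, Rminus]; ring
    exact ENNReal.ofReal_le_ofReal (by linarith [h k])
  rw [EReal.le_neg, ← EReal.coe_neg, ← max_eq_left hr, ← EReal.coe_ennreal_ofReal]
  exact EReal.coe_ennreal_le_coe_ennreal_iff.2 hle

lemma exists_forall_RminusBirk_lt [CompactSpace M] (hf : Continuous f) (hV : IsCalibrated f V)
    {F : Set (ℕ → M)} (hF : IsClosed F) {r : ℝ}
    (hr : (⨆ z ∈ F, -(RplusInf f V z : EReal)) < r) :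
    ∃ k, ∀ z ∈ F, RminusBirk f V k z < r := by
  refine hF.isCompact.exists_forall_lt_of_antitone (continuous_RminusBirk hf hV)
    (RminusBirk_antitone hV) fun z hz => ?_
  by_contra! h
  exact ((le_neg_RplusInf_of_forall_le hV h).trans
    (le_iSup₂ (f := fun z _ => -(RplusInf f V z : EReal)) z hz)).not_gt hr

end Residual

section Ruelle

variable [MetricSpace M] [MeasurableSpace M] (m : Measure M) {h w : (ℕ → M) → ℝ}

lemma Ruelle_nonneg (hw : ∀ y, 0 ≤ w y) (x : ℕ → M) : 0 ≤ Ruelle m h w x :=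
  integral_nonneg fun _ => mul_nonneg (Real.exp_pos _).le (hw _)

lemma iterate_Ruelle_nonneg (hw : ∀ y, 0 ≤ w y) (n : ℕ) (x : ℕ → M) :
    0 ≤ (Ruelle m h)^[n] w x :=
  Function.Iterate.rec (fun w : (ℕ → M) → ℝ => ∀ y, 0 ≤ w y) hw
    (fun _ hw => Ruelle_nonneg m hw) n x

lemma Ruelle_le (hnorm : ∀ x, Ruelle m h (fun _ => 1) x = 1) {B : ℝ} (hw0 : ∀ y, 0 ≤ w y)
    (hwB : ∀ y, w y ≤ B) (x : ℕ → M) : Ruelle m h w x ≤ B := by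
  have hexp : ∫ a, Real.exp (h (cons a x)) ∂m = 1 := by simpa [Ruelle] using hnorm x
  calc Ruelle m h w x ≤ ∫ a, B * Real.exp (h (cons a x)) ∂m :=
        integral_mono_of_nonneg (ae_of_all _ fun _ => mul_nonneg (Real.exp_pos _).le (hw0 _))
          ((Integrable.of_integral_ne_zero (by simp [hexp])).const_mul B)
          (ae_of_all _ fun _ =>
            (mul_le_mul_of_nonneg_left (hwB _) (Real.exp_pos _).le).trans_eq (mul_comm _ _))
    _ = B := by rw [integral_const_mul, hexp, mul_one]

lemma iterate_Ruelle_le (hnorm : ∀ x, Ruelle m h (fun _ => 1) x = 1) {B : ℝ}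
    (hw0 : ∀ y, 0 ≤ w y) (hwB : ∀ y, w y ≤ B) (n : ℕ) (x : ℕ → M) :
    (Ruelle m h)^[n] w x ≤ B :=
  (Function.Iterate.rec (fun w : (ℕ → M) → ℝ => (∀ y, 0 ≤ w y) ∧ ∀ y, w y ≤ B) ⟨hw0, hwB⟩
    (fun _ hw => ⟨Ruelle_nonneg m hw.1, Ruelle_le m hnorm hw.1 hw.2⟩) n).2 x

lemma iterate_Ruelle_indicator_le [IsProbabilityMeasure m] {φ : (ℕ → M) → ℝ}
    (hhφ : ∀ z, h z ≤ φ z) (F : Set (ℕ → M)) (k : ℕ) (x : ℕ → M) (B : ℝ)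
    (hB : ∀ y ∈ F, shift^[k] y = x → birkhoffSum shift φ k y ≤ B) :
    (Ruelle m h)^[k] (F.indicator fun _ => 1) x ≤ Real.exp B := by
  have hχ : ∀ n y, 0 ≤ (Ruelle m h)^[n] (F.indicator fun _ => 1) y :=
    iterate_Ruelle_nonneg m (indicator_nonneg fun _ _ => zero_le_one)
  induction k generalizing x B with
  | zero =>
    by_cases hx : x ∈ F
    · simpa [hx] using hB x hx rfl
    · simp [hx, Real.exp_nonneg]
  | succ k ih =>
    have hstep : ∀ a, Real.exp (h (cons a x)) * (Ruelle m h)^[k] (F.indicator fun _ => 1)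
        (cons a x) ≤ Real.exp B := by
      intro a
      have hk := ih (cons a x) (B - φ (cons a x)) fun y hy hyk => by
        have := hB y hy (by rw [Function.iterate_succ_apply', hyk, shift_cons])
        rw [birkhoffSum_succ, hyk] at this
        linarith
      calc _ ≤ Real.exp (φ (cons a x)) * Real.exp (B - φ (cons a x)) :=
            mul_le_mul (Real.exp_le_exp.2 (hhφ _)) hk (hχ _ _) (Real.exp_nonneg _)
        _ = Real.exp B := by rw [← Real.exp_add, add_sub_cancel]
    rw [Function.iterate_succ_apply']
    calc Ruelle m h _ x ≤ ∫ _, Real.exp B ∂m :=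
          integral_mono_of_nonneg (ae_of_all _ fun _ => mul_nonneg (Real.exp_nonneg _) (hχ _ _))
            (integrable_const _) (ae_of_all _ hstep)
      _ = Real.exp B := by simp

end Ruelle

theorem ldp_upper_bound_for_Ruelle_iterates_general
    [MetricSpace M] [CompactSpace M] [MeasurableSpace M]
    (hdiam : ∀ a b : M, dist a b ≤ 1)
    (θ : ℝ) (hθ : θ ∈ Set.Ioo (0 : ℝ) 1)
    (m : Measure M) [IsProbabilityMeasure m]
    (f V : (ℕ → M) → ℝ) (hf : IsHolder θ f)
    (hV : IsCalibrated f V)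
    (g : ℝ → (ℕ → M) → ℝ)
    (hnorm : ∀ c > (0 : ℝ), ∀ x, Ruelle m (g c) (fun _ => 1) x = 1)
    (hconv : ∀ ε > (0 : ℝ), ∃ N : ℝ, ∀ c > N, ∀ x, |g c x - c * Rminus f V x| / c < ε)
    :
    ∀ x : ℕ → M, ∀ F : Set (ℕ → M), IsClosed F →
      (⨆ z ∈ F, -(RplusInf f V z : EReal))
          = -(((⨅ z ∈ F, RplusInf f V z) : ℝ≥0∞) : EReal) ∧
      ∀ r : ℝ, (⨆ z ∈ F, -(RplusInf f V z : EReal)) < (r : EReal) →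
        ∃ N : ℝ, ∀ c > N, ∀ n : ℕ, (n : ℝ) > N →
          ((1 / c : ℝ) : EReal) *
            elog ((Ruelle m (g c))^[n] (F.indicator fun _ => 1) x) < (r : EReal) := by
  intro x F hF
  refine ⟨by simp only [EReal.coe_ennreal_iInf, EReal.neg_iInf], fun r hr => ?_⟩
  obtain ⟨r', hr', hr'r⟩ := EReal.exists_between_coe_real hr
  obtain ⟨k, hk⟩ := exists_forall_RminusBirk_lt (hf.continuous hdiam hθ.1.le hθ.2) hV hF hr'
  obtain ⟨ε, hε, hkε⟩ : ∃ ε > 0, r' + k * ε < r := by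
    have hrr : r' < r := EReal.coe_lt_coe_iff.1 hr'r
    refine ⟨(r - r') / (k + 1), div_pos (sub_pos.2 hrr) (by positivity), ?_⟩
    have : (k : ℝ) * ((r - r') / (k + 1)) < r - r' := by
      rw [mul_div_assoc', div_lt_iff₀ (by positivity)]
      linarith
    linarith
  obtain ⟨N, hN⟩ := hconv ε hε
  refine ⟨max (max N k) 0, fun c hc n hn => ?_⟩
  simp only [gt_iff_lt, max_lt_iff] at hc hn
  have hg : ∀ z, g c z ≤ c * Rminus f V z + c * ε := fun z => by
    have := (div_lt_iff₀ hc.2).1 (hN c hc.1.1 z)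
    linarith [le_abs_self (g c z - c * Rminus f V z)]
  have hLk : ∀ y,
      (Ruelle m (g c))^[k] (F.indicator fun _ => 1) y ≤ Real.exp (c * (r' + k * ε)) :=
    fun y => iterate_Ruelle_indicator_le m hg F k y _ fun z hz _ => by
      rw [birkhoffSum_mul_add_const, ← RminusBirk_eq_birkhoffSum]
      nlinarith [hk z hz]
  have hLk0 : ∀ y, 0 ≤ (Ruelle m (g c))^[k] (F.indicator fun _ => 1) y :=
    iterate_Ruelle_nonneg m (indicator_nonneg fun _ _ => zero_le_one) k
  rw [← Nat.sub_add_cancel (Nat.cast_lt.1 hn.1.2).le, Function.iterate_add_apply]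
  exact coe_one_div_mul_elog_lt hc.2 (iterate_Ruelle_nonneg m hLk0 _ x)
    (iterate_Ruelle_le m (hnorm c hc.2) hLk0 hLk _ x) hkε

theorem ldp_upper_bound_for_Ruelle_iterates
    [MetricSpace M] [CompactSpace M] [ConnectedSpace M] [MeasurableSpace M] [BorelSpace M]
    (hdiam : ∀ a b : M, dist a b ≤ 1)
    (θ : ℝ) (hθ : θ ∈ Set.Ioo (0 : ℝ) 1)
    (m : Measure M) [IsProbabilityMeasure m]
    (f V : (ℕ → M) → ℝ) (hf : IsHolder θ f)
    (huniq : ∃! μ : Measure (ℕ → M), IsMaximizing f μ)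
    (hV : IsCalibrated f V)
    (g : ℝ → (ℕ → M) → ℝ)
    (hgcont : ∀ c > (0 : ℝ), Continuous (g c))
    (hnorm : ∀ c > (0 : ℝ), ∀ x, Ruelle m (g c) (fun _ => 1) x = 1)
    (hconv : ∀ ε > (0 : ℝ), ∃ N : ℝ, ∀ c > N, ∀ x, |g c x - c * Rminus f V x| / c < ε)
    :
    ∀ x : ℕ → M, ∀ F : Set (ℕ → M), IsClosed F →
      (⨆ z ∈ F, -(RplusInf f V z : EReal))
          = -(((⨅ z ∈ F, RplusInf f V z) : ℝ≥0∞) : EReal) ∧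
      ∀ r : ℝ, (⨆ z ∈ F, -(RplusInf f V z : EReal)) < (r : EReal) →
        ∃ N : ℝ, ∀ c > N, ∀ n : ℕ, (n : ℝ) > N →
          ((1 / c : ℝ) : EReal) *
            elog ((Ruelle m (g c))^[n] (F.indicator fun _ => 1) x) < (r : EReal) :=
  ldp_upper_bound_for_Ruelle_iterates_general hdiam θ hθ m f V hf hV g hnorm hconv

end GXY
end
end

section
/- Let f : X → ℝ be continuous and let V be a calibrated subaction for f. If z ∈ X satisfies R_+^∞(z) < ∞, then the Birkhoff averages of f along the orbit of z converge to the maximal ergodic value: lim_{n→∞} (1/n) Σ_{j=0}^{n−1} f(σ^j(z)) = β(f). -/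
/-!
Calibration gives `R₊ ≥ 0` and the coboundary identity `f = β(f) + V ∘ σ - V - R₊`. Summing it
along the orbit of `z`, the Birkhoff sum `S_n f (z)` differs from `n β(f)` by
`V(σⁿ z) - V(z) - S_n R₊ (z)`. Here `V` is bounded because the space is compact, and
`0 ≤ S_n R₊(z) ≤ R₊^∞(z) < ∞`, so the error is bounded and vanishes after division by `n`.
-/

open MeasureTheory Filter Topology Set ENNReal

noncomputable section

namespace GXY

variable {M : Type*}

theorem sum_range_le_toReal_tsum_ofReal {a : ℕ → ℝ} (ha : ∀ j, 0 ≤ a j)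
    (hfin : ∑' j, ENNReal.ofReal (a j) ≠ ⊤) (n : ℕ) :
    ∑ j ∈ Finset.range n, a j ≤ (∑' j, ENNReal.ofReal (a j)).toReal := by
  have hsum : ∑ j ∈ Finset.range n, a j =
      (∑ j ∈ Finset.range n, ENNReal.ofReal (a j)).toReal := by
    rw [ENNReal.toReal_sum fun j _ => ofReal_ne_top]
    exact Finset.sum_congr rfl fun j _ => (toReal_ofReal (ha j)).symm
  rw [hsum]
  exact toReal_mono hfin (ENNReal.sum_le_tsum _)

theorem tendsto_average_of_abs_sub_mul_le {s : ℕ → ℝ} {b K : ℝ}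
    (hs : ∀ n, |s n - n * b| ≤ K) :
    Tendsto (fun n : ℕ => (1 / (n : ℝ)) * s n) atTop (𝓝 b) := by
  have herr : Tendsto (fun n : ℕ => (s n - n * b) / n) atTop (𝓝 0) := by
    refine squeeze_zero_norm (fun n => ?_) (tendsto_const_div_atTop_nhds_zero_nat K)
    rw [norm_div, Real.norm_eq_abs, RCLike.norm_natCast]
    exact div_le_div_of_nonneg_right (hs n) n.cast_nonneg
  refine (by simpa using herr.const_add b : Tendsto _ atTop (𝓝 b)).congr' ?_
  filter_upwards [eventually_ne_atTop 0] with n hn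
  field_simp
  ring

section Calibrated

variable [MetricSpace M] [MeasurableSpace M] {f V : (ℕ → M) → ℝ}

theorem Rplus_nonneg (hV : IsCalibrated f V) (x : ℕ → M) : 0 ≤ Rplus f V x := by
  have hle : f x + V x - betaF f ≤ V (shift x) := (hV.2 (shift x)).2 ⟨x, rfl, rfl⟩
  simp only [Rplus]
  linarith

theorem sum_range_Rplus_le_toReal_RplusInf (hV : IsCalibrated f V) {z : ℕ → M}
    (hz : RplusInf f V z ≠ ⊤) (n : ℕ) :
    ∑ j ∈ Finset.range n, Rplus f V (shift^[j] z) ≤ (RplusInf f V z).toReal :=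
  sum_range_le_toReal_tsum_ofReal (fun _ => Rplus_nonneg hV _) hz n

variable (f V) in
theorem birkhoff_sum_eq_sub_sum_Rplus (z : ℕ → M) (n : ℕ) :
    ∑ j ∈ Finset.range n, f (shift^[j] z) =
      n * betaF f + (V (shift^[n] z) - V z) - ∑ j ∈ Finset.range n, Rplus f V (shift^[j] z) := by
  have hcob : ∀ j, f (shift^[j] z) =
      betaF f + (V (shift^[j + 1] z) - V (shift^[j] z)) - Rplus f V (shift^[j] z) := by
    intro j
    rw [Rplus, Function.iterate_succ_apply']
    ring
  rw [Finset.sum_congr rfl fun j _ => hcob j, Finset.sum_sub_distrib, Finset.sum_add_distrib,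
    Finset.sum_range_sub (fun j => V (shift^[j] z))]
  simp

end Calibrated

theorem birkhoff_average_tendsto_beta_of_finite_RplusInf_general
    [MetricSpace M] [CompactSpace M] [MeasurableSpace M]
    (f V : (ℕ → M) → ℝ) (hV : IsCalibrated f V)
    (z : ℕ → M) (hz : RplusInf f V z ≠ ⊤) :
    Tendsto (fun n : ℕ => (1 / (n : ℝ)) * ∑ j ∈ Finset.range n, f (shift^[j] z)) atTop
      (nhds (betaF f)) := by
  obtain ⟨C, hC⟩ := isCompact_univ.exists_bound_of_continuousOn hV.1.continuousOn
  refine tendsto_average_of_abs_sub_mul_le (K := 2 * C + (RplusInf f V z).toReal) fun n => ?_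
  have hVn := abs_le.1 (hC (shift^[n] z) (mem_univ _))
  have hV0 := abs_le.1 (hC z (mem_univ _))
  have hR0 : 0 ≤ ∑ j ∈ Finset.range n, Rplus f V (shift^[j] z) :=
    Finset.sum_nonneg fun j _ => Rplus_nonneg hV _
  have hRT := sum_range_Rplus_le_toReal_RplusInf hV hz n
  rw [birkhoff_sum_eq_sub_sum_Rplus f V z n, abs_le]
  constructor <;> linarith

theorem birkhoff_average_tendsto_beta_of_finite_RplusInf
    [MetricSpace M] [CompactSpace M] [ConnectedSpace M] [MeasurableSpace M] [BorelSpace M]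
    (hdiam : ∀ a b : M, dist a b ≤ 1)
    (θ : ℝ) (hθ : θ ∈ Set.Ioo (0 : ℝ) 1)
    (f V : (ℕ → M) → ℝ) (hf : Continuous f) (hV : IsCalibrated f V)
    (z : ℕ → M) (hz : RplusInf f V z ≠ ⊤) :
    Tendsto (fun n : ℕ => (1 / (n : ℝ)) * ∑ j ∈ Finset.range n, f (shift^[j] z)) atTop
      (nhds (betaF f)) :=
  birkhoff_average_tendsto_beta_of_finite_RplusInf_general f V hV z hz

end GXY
end
end
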